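/- For the 2×2 matrix L_t = [[1, 2t],[0, -1]] with t > 0, the Davis–Wielandt shell DW_BCK(L_t) = {((2Re⟨Ax,x⟩)/(‖Ax‖²+‖x‖²), (2Im⟨Ax,x⟩)/(‖Ax‖²+‖x‖²), (‖Ax‖²-‖x‖²)/(‖Ax‖²+‖x‖²)) : x ≠ 0} equals the ellipsoid surface {(x,y,z) : x² + ((1+t²)/t²)(y² + z²) = 1}. -/

import Mathlib

/-- The Davis–Wielandt shell in the BCK model. -/
noncomputable def DWshell (A : Matrix (Fin 2) (Fin 2) ℂ) : Set (ℝ × ℝ × ℝ) :=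
  {p : ℝ × ℝ × ℝ | ∃ x : EuclideanSpace ℂ (Fin 2), x ≠ 0 ∧
      p = (2 * (inner ℂ x (Matrix.toEuclideanLin A x) : ℂ).re /
            (‖Matrix.toEuclideanLin A x‖ ^ 2 + ‖x‖ ^ 2),
           2 * (inner ℂ x (Matrix.toEuclideanLin A x) : ℂ).im /
            (‖Matrix.toEuclideanLin A x‖ ^ 2 + ‖x‖ ^ 2),
           (‖Matrix.toEuclideanLin A x‖ ^ 2 - ‖x‖ ^ 2) /
            (‖Matrix.toEuclideanLin A x‖ ^ 2 + ‖x‖ ^ 2))}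

/-!
Every coordinate of the shell point of `x = (x₀, x₁)` is a ratio of real-linear functions of
the Gram data `u = |x₀|²`, `w = |x₁|²`, `c = conj x₀ * x₁`, and these data range exactly over the
cone `|c|² = u w`, `u, w ≥ 0`, `u + w > 0`. On the cone the ellipsoid equation is a polynomial
identity. Conversely, a point of the ellipsoid is attained by solving the linear system for the
Gram data with the common denominator normalised to `2`; the ellipsoid equation is then exactly
the cone condition `|c|² = u w` for the solution.
-/

open Complex ComplexConjugate

lemma EuclideanSpace.norm_sq_fin_two (x : EuclideanSpace ℂ (Fin 2)) :
    ‖x‖ ^ 2 = normSq (x 0) + normSq (x 1) := by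
  simp [EuclideanSpace.norm_sq_eq, Fin.sum_univ_two, Complex.sq_norm]

lemma EuclideanSpace.exists_normSq_normSq_conj_mul_eq {u w : ℝ} {c : ℂ}
    (hu : 0 ≤ u) (hw : 0 ≤ w) (hc : normSq c = u * w) :
    ∃ x : EuclideanSpace ℂ (Fin 2),
      normSq (x 0) = u ∧ normSq (x 1) = w ∧ conj (x 0) * x 1 = c := by
  rcases hu.eq_or_lt with rfl | hu
  · refine ⟨!₂[0, √w], by simp, ?_, ?_⟩
    · simp [normSq_ofReal, Real.mul_self_sqrt hw]
    · simp [normSq_eq_zero.1 (by simpa using hc)]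
  · have hsqrt : (√u : ℂ) ≠ 0 := by exact_mod_cast (Real.sqrt_pos.2 hu).ne'
    refine ⟨!₂[√u, c / √u], by simp [normSq_ofReal, Real.mul_self_sqrt hu.le], ?_, ?_⟩
    · simp [normSq_ofReal, Real.mul_self_sqrt hu.le, hc, hu.ne']
    · simp only [Matrix.cons_val_zero, Matrix.cons_val_one, conj_ofReal]
      exact mul_div_cancel₀ c hsqrt

section Lt

variable (t : ℝ) (x : EuclideanSpace ℂ (Fin 2))

local notation "L" => Matrix.toEuclideanLin !![(1 : ℂ), 2 * t; 0, -1]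

lemma toEuclideanLin_Lt_apply_zero : L x 0 = x 0 + 2 * t * x 1 := by
  simp [Matrix.toLpLin_apply, dotProduct, Fin.sum_univ_two]

lemma toEuclideanLin_Lt_apply_one : L x 1 = -x 1 := by
  simp [Matrix.toLpLin_apply, dotProduct, Fin.sum_univ_two]

lemma inner_toEuclideanLin_Lt :
    inner ℂ x (L x) = (normSq (x 0) - normSq (x 1) : ℝ) + 2 * t * (conj (x 0) * x 1) := by
  rw [PiLp.inner_apply, Fin.sum_univ_two, toEuclideanLin_Lt_apply_zero,
    toEuclideanLin_Lt_apply_one]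
  push_cast [RCLike.inner_apply, normSq_eq_conj_mul_self]
  ring

lemma norm_toEuclideanLin_Lt_sq :
    ‖L x‖ ^ 2 =
      normSq (x 0) + 4 * t * (conj (x 0) * x 1).re + (4 * t ^ 2 + 1) * normSq (x 1) := by
  rw [EuclideanSpace.norm_sq_fin_two, toEuclideanLin_Lt_apply_zero, toEuclideanLin_Lt_apply_one]
  simp [normSq_apply]
  ring

end Lt

/-- The point of `DWshell !![1, 2t; 0, -1]` at a vector `x` with `u = |x₀|²`, `w = |x₁|²` and
`c = conj x₀ * x₁`. -/
noncomputable def ltShellPoint (t u w : ℝ) (c : ℂ) : ℝ × ℝ × ℝ :=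
  let D := (u + 4 * t * c.re + (4 * t ^ 2 + 1) * w) + (u + w)
  (2 * (u - w + 2 * t * c.re) / D, 2 * (2 * t * c.im) / D,
    ((u + 4 * t * c.re + (4 * t ^ 2 + 1) * w) - (u + w)) / D)

lemma DWshell_Lt_eq (t : ℝ) :
    DWshell !![(1 : ℂ), 2 * t; 0, -1] = {p | ∃ x : EuclideanSpace ℂ (Fin 2), x ≠ 0 ∧
      p = ltShellPoint t (normSq (x 0)) (normSq (x 1)) (conj (x 0) * x 1)} := by
  refine Set.ext fun p => exists_congr fun x => and_congr_right fun _ => ?_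
  rw [inner_toEuclideanLin_Lt, norm_toEuclideanLin_Lt_sq, EuclideanSpace.norm_sq_fin_two]
  simp [ltShellPoint]

lemma mem_DWshell_Lt_iff {t : ℝ} {p : ℝ × ℝ × ℝ} :
    p ∈ DWshell !![(1 : ℂ), 2 * t; 0, -1] ↔ ∃ u w : ℝ, ∃ c : ℂ,
      0 ≤ u ∧ 0 ≤ w ∧ 0 < u + w ∧ normSq c = u * w ∧ p = ltShellPoint t u w c := by
  rw [DWshell_Lt_eq]
  constructor
  · rintro ⟨x, hx, rfl⟩
    refine ⟨_, _, _, normSq_nonneg _, normSq_nonneg _, ?_, by simp [normSq_mul], rfl⟩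
    rw [← EuclideanSpace.norm_sq_fin_two]
    positivity
  · rintro ⟨u, w, c, hu, hw, huw, hc, rfl⟩
    obtain ⟨x, rfl, rfl, rfl⟩ := EuclideanSpace.exists_normSq_normSq_conj_mul_eq hu hw hc
    refine ⟨x, ?_, rfl⟩
    rintro rfl
    simp at huw

lemma ltShellPoint_denom_pos {t u w : ℝ} {c : ℂ} (hw : 0 ≤ w) (huw : 0 < u + w)
    (hc : normSq c = u * w) : 0 < (u + 4 * t * c.re + (4 * t ^ 2 + 1) * w) + (u + w) := by
  have hre : c.re ^ 2 ≤ u * w := by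
    rw [← hc, normSq_apply]
    nlinarith [sq_nonneg c.im]
  rcases hw.eq_or_lt with rfl | hw
  · have : c.re = 0 := by nlinarith [sq_nonneg c.re]
    simp only [this]
    linarith
  · have : 0 ≤ w * (u + 2 * t * c.re + t ^ 2 * w) := by nlinarith [sq_nonneg (c.re + t * w)]
    nlinarith [(mul_nonneg_iff_of_pos_left hw).1 this, sq_nonneg t]

lemma ltShellPoint_mem_ellipsoid {t u w : ℝ} {c : ℂ} (ht : t ≠ 0) (hc : normSq c = u * w)
    (hD : (u + 4 * t * c.re + (4 * t ^ 2 + 1) * w) + (u + w) ≠ 0) :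
    ltShellPoint t u w c ∈
      {p : ℝ × ℝ × ℝ | p.1 ^ 2 + ((1 + t ^ 2) / t ^ 2) * (p.2.1 ^ 2 + p.2.2 ^ 2) = 1} := by
  rw [normSq_apply] at hc
  simp only [Set.mem_ofPred_eq, ltShellPoint]
  generalize hDdef : (u + 4 * t * c.re + (4 * t ^ 2 + 1) * w) + (u + w) = D at hD
  field_simp
  rw [← hDdef]
  linear_combination (16 * t ^ 2 * (1 + t ^ 2)) * hc

lemma exists_ltShellPoint_eq {t : ℝ} {p : ℝ × ℝ × ℝ} (ht : 0 < t)
    (hp : p.1 ^ 2 + ((1 + t ^ 2) / t ^ 2) * (p.2.1 ^ 2 + p.2.2 ^ 2) = 1) :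
    ∃ u w : ℝ, ∃ c : ℂ,
      0 ≤ u ∧ 0 ≤ w ∧ 0 < u + w ∧ normSq c = u * w ∧ p = ltShellPoint t u w c := by
  obtain ⟨X, Y, Z⟩ := p
  have h : t ^ 2 * X ^ 2 + (1 + t ^ 2) * (Y ^ 2 + Z ^ 2) = t ^ 2 := by
    field_simp at hp
    linarith
  have hX : X ≤ 1 := by
    have : X ^ 2 ≤ 1 := by nlinarith [sq_nonneg Y, sq_nonneg Z, mul_pos ht ht]
    nlinarith
  have hZ : Z < 1 := by nlinarith [sq_nonneg X, sq_nonneg Y, sq_nonneg (Z - 1)]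
  set w := (1 - X) / (2 * (1 + t ^ 2))
  set u := 1 - Z - w
  set c : ℂ := ⟨(Z - 2 * t ^ 2 * w) / (2 * t), Y / (2 * t)⟩
  have hc : normSq c = u * w := by
    simp only [normSq_apply, c, u, w]
    field_simp
    linear_combination (1 + t ^ 2) * h
  have hw : 0 ≤ w := by positivity
  have hu : 0 ≤ u := by nlinarith [normSq_nonneg c]
  have hD : (u + 4 * t * c.re + (4 * t ^ 2 + 1) * w) + (u + w) = 2 := by
    simp only [c, u]
    field_simp
    ring
  refine ⟨u, w, c, hu, hw, by simp only [u]; linarith, hc, ?_⟩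
  simp only [ltShellPoint, hD]
  simp only [c, u, w]
  refine Prod.ext ?_ (Prod.ext ?_ ?_) <;> field_simp <;> ring

theorem DWshell_Lt (t : ℝ) (ht : 0 < t) :
    DWshell !![(1 : ℂ), 2 * t; 0, -1] =
      {p : ℝ × ℝ × ℝ |
        p.1 ^ 2 + ((1 + t ^ 2) / t ^ 2) * (p.2.1 ^ 2 + p.2.2 ^ 2) = 1} := by
  ext p
  rw [mem_DWshell_Lt_iff]
  constructor
  · rintro ⟨u, w, c, -, hw, huw, hc, rfl⟩
    exact ltShellPoint_mem_ellipsoid ht.ne' hc (ltShellPoint_denom_pos hw huw hc).ne'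
  · exact exists_ltShellPoint_eq ht
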